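/- Let A and B be Banach algebras, let A be strong pseudo-amenable, and let T : A → B be a continuous surjective algebra homomorphism. Then B is strong pseudo-amenable. -/

import Mathlib

noncomputable section

open ContinuousLinearMap NormedSpace

/-- A directed index system for nets. -/
structure DirSys : Type 1 where
  ι : Type
  le : ι → ι → Prop
  refl : ∀ i, le i i
  trans : ∀ {i j k}, le i j → le j k → le i k
  nonempty : Nonempty ι
  directed : ∀ i j, ∃ k, le i k ∧ le j k

/-- Convergence of a net indexed by a directed system, in a (pseudo)metric space. -/
def DirSys.Tendsto (D : DirSys) {X : Type*} [PseudoMetricSpace X] (m : D.ι → X) (x : X) : Prop :=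
  ∀ ε : ℝ, 0 < ε → ∃ i, ∀ j, D.le i j → dist (m j) x < ε

variable (A : Type*) [NonUnitalNormedRing A] [NormedSpace ℂ A]
  [IsScalarTower ℂ A A] [SMulCommClass ℂ A A]

/-- The continuous bilinear forms on `A`, i.e. the dual space of the projective tensor
product `A ⊗̂ A`. -/
abbrev BilForms := A →L[ℂ] StrongDual ℂ A

/-- The bidual `(A ⊗̂ A)**` of the projective tensor product, realized concretely as the
dual space of the space of continuous bilinear forms on `A` (the latter being canonically,
isometrically, the dual of `A ⊗̂ A`). -/
abbrev TensorBidual := StrongDual ℂ (BilForms A)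

instance : NormedAddCommGroup (TensorBidual A) :=
  ContinuousLinearMap.toNormedAddCommGroup (E := BilForms A) (F := ℂ) (σ₁₂ := RingHom.id ℂ)

instance : NormedSpace ℂ (TensorBidual A) :=
  ContinuousLinearMap.toNormedSpace (E := BilForms A) (F := ℂ) (σ₁₂ := RingHom.id ℂ) (𝕜' := ℂ)

/-- The bidual `A**` of `A`. -/
abbrev Bidual := StrongDual ℂ (StrongDual ℂ A)

variable {A}

/-- The elementary tensor `x ⊗ y`, viewed inside `(A ⊗̂ A)**` via the canonical isometric
embedding of `A ⊗̂ A` into its bidual. -/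
def elemT (x y : A) : TensorBidual A :=
  (ContinuousLinearMap.apply ℂ ℂ y).comp (ContinuousLinearMap.apply ℂ (StrongDual ℂ A) x)

variable (A)

/-- The canonical isometric copy of `A ⊗̂ A` inside its bidual: the closure of the linear
span of the elementary tensors. -/
def ptp : Submodule ℂ (TensorBidual A) :=
  (Submodule.span ℂ {m : TensorBidual A | ∃ x y : A, m = elemT x y}).topologicalClosure

/-- The map `f ↦ f·a` on bilinear forms, `(f·a)(x,y) = f(ax, y)`; predual of the left
module action of `A` on `(A ⊗̂ A)**`. -/
def leftBil (a : A) : BilForms A →L[ℂ] BilForms A :=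
  (compL ℂ A A (StrongDual ℂ A)).flip (ContinuousLinearMap.mul ℂ A a)

/-- The map `f ↦ a·f` on bilinear forms, `(a·f)(x,y) = f(x, ya)`; predual of the right
module action of `A` on `(A ⊗̂ A)**`. -/
def rightBil (a : A) : BilForms A →L[ℂ] BilForms A :=
  compL ℂ A (StrongDual ℂ A) (StrongDual ℂ A)
    ((compL ℂ A A ℂ).flip ((ContinuousLinearMap.mul ℂ A).flip a))

variable {A}

/-- The left module action `a · m` of `A` on `(A ⊗̂ A)**`, extending
`a · (x ⊗ y) = (a x) ⊗ y`. -/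
def tsmulL (a : A) (m : TensorBidual A) : TensorBidual A := m.comp (leftBil A a)

/-- The right module action `m · a` of `A` on `(A ⊗̂ A)**`, extending
`(x ⊗ y) · a = x ⊗ (y a)`. -/
def tsmulR (a : A) (m : TensorBidual A) : TensorBidual A := m.comp (rightBil A a)

variable (A)

/-- The adjoint `π_A* : A* → (A ⊗̂ A)*` of the product morphism `π_A`, namely
`(π_A* f)(x, y) = f (x y)`. -/
def piStar : StrongDual ℂ A →L[ℂ] BilForms A :=
  ((compL ℂ A (A →L[ℂ] A) (StrongDual ℂ A)).flip (ContinuousLinearMap.mul ℂ A)).comp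
    (compL ℂ A A ℂ)

variable {A}

/-- The second adjoint `π_A** : (A ⊗̂ A)** → A**` of the product morphism. -/
def piSS (m : TensorBidual A) : Bidual A := m.comp (piStar A)

variable (A)

/-- The map `f ↦ f·a` on `A*`, `(f·a)(x) = f(ax)`. -/
def dualROp (a : A) : StrongDual ℂ A →L[ℂ] StrongDual ℂ A :=
  (compL ℂ A A ℂ).flip (ContinuousLinearMap.mul ℂ A a)

/-- The map `f ↦ a·f` on `A*`, `(a·f)(x) = f(xa)`. -/
def dualLOp (a : A) : StrongDual ℂ A →L[ℂ] StrongDual ℂ A :=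
  (compL ℂ A A ℂ).flip ((ContinuousLinearMap.mul ℂ A).flip a)

variable {A}

/-- The product `a · Φ` of `a ∈ A` and `Φ ∈ A**`: `(a·Φ)(f) = Φ(f·a)`. -/
def bsmulL (a : A) (Φ : Bidual A) : Bidual A := Φ.comp (dualROp A a)

/-- The product `Φ · a` of `Φ ∈ A**` and `a ∈ A`: `(Φ·a)(f) = Φ(a·f)`. -/
def bsmulR (a : A) (Φ : Bidual A) : Bidual A := Φ.comp (dualLOp A a)

/-- The canonical isometric embedding of `A` into its bidual. -/
def inclB (a : A) : Bidual A := NormedSpace.inclusionInDoubleDual ℂ A a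

variable (A)

/-- A Banach algebra `A` is *strong pseudo-amenable* if there is a (not necessarily bounded)
net `(m_α)` in `(A ⊗̂ A)**` such that `a·m_α − m_α·a → 0` and
`a·π_A**(m_α) = π_A**(m_α)·a → a` for every `a ∈ A`. -/
def StrongPseudoAmenable : Prop :=
  ∃ (D : DirSys) (m : D.ι → TensorBidual A),
    (∀ a : A, D.Tendsto (fun α => tsmulL a (m α) - tsmulR a (m α)) 0) ∧
    (∀ (a : A) (α : D.ι), bsmulL a (piSS (m α)) = bsmulR a (piSS (m α))) ∧
    (∀ a : A, D.Tendsto (fun α => bsmulR a (piSS (m α))) (inclB a))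

/-- A Banach algebra `A` is *pseudo-amenable* if there is a (not necessarily bounded)
net `(m_α)` in `A ⊗̂ A` such that `a·m_α − m_α·a → 0` and `π_A(m_α)a → a` for every `a ∈ A`. -/
def PseudoAmenable : Prop :=
  ∃ (D : DirSys) (m : D.ι → TensorBidual A),
    (∀ α, m α ∈ ptp A) ∧
    (∀ a : A, D.Tendsto (fun α => tsmulL a (m α) - tsmulR a (m α)) 0) ∧
    (∀ a : A, D.Tendsto (fun α => bsmulR a (piSS (m α))) (inclB a))

/-- A Banach algebra `A` is *pseudo-contractible* if there is a net `(m_α)` in `A ⊗̂ A`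
such that `a·m_α = m_α·a` and `π_A(m_α)a → a` for every `a ∈ A`. -/
def PseudoContractible : Prop :=
  ∃ (D : DirSys) (m : D.ι → TensorBidual A),
    (∀ α, m α ∈ ptp A) ∧
    (∀ (a : A) (α : D.ι), tsmulL a (m α) = tsmulR a (m α)) ∧
    (∀ a : A, D.Tendsto (fun α => bsmulR a (piSS (m α))) (inclB a))

/-- A Banach algebra `A` is *amenable* if it has a bounded approximate diagonal: a bounded
net `(m_α)` in `A ⊗̂ A` such that `a·m_α − m_α·a → 0` and `π_A(m_α)a → a` for every `a ∈ A`. -/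
def AmenableBanachAlgebra : Prop :=
  ∃ (D : DirSys) (m : D.ι → TensorBidual A) (C : ℝ),
    (∀ α, m α ∈ ptp A) ∧
    (∀ α, ‖m α‖ ≤ C) ∧
    (∀ a : A, D.Tendsto (fun α => tsmulL a (m α) - tsmulR a (m α)) 0) ∧
    (∀ a : A, D.Tendsto (fun α => bsmulR a (piSS (m α))) (inclB a))

end

/-! A surjective homomorphism `T` pushes a strong pseudo-amenability net `(m_α)` of `A` forward
to one of `B` along `(T ⊗ T)**`, the adjoint of the pullback `f ↦ f ∘ (T × T)` of bilinear
forms. Multiplicativity of `T` makes `(T ⊗ T)**` intertwine the module actions of `a` and `T a`,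
and `π_B** ∘ (T ⊗ T)** = T** ∘ π_A**`; since these adjoints are continuous, every convergence
transfers, and surjectivity of `T` covers every `b ∈ B`. -/

theorem DirSys.Tendsto.map {D : DirSys} {X Y : Type*} [PseudoMetricSpace X]
    [PseudoMetricSpace Y] {f : X → Y} (hf : Continuous f) {m : D.ι → X} {x : X}
    (h : D.Tendsto m x) : D.Tendsto (fun α => f (m α)) (f x) := by
  intro ε hε
  obtain ⟨δ, hδ, hfδ⟩ := Metric.continuous_iff.1 hf x ε hε
  obtain ⟨i, hi⟩ := h δ hδ
  exact ⟨i, fun j hj => hfδ _ (hi j hj)⟩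

noncomputable section

open ContinuousLinearMap

def dualMap {E F : Type*} [SeminormedAddCommGroup E] [NormedSpace ℂ E]
    [SeminormedAddCommGroup F] [NormedSpace ℂ F] (f : E →L[ℂ] F) :
    StrongDual ℂ F →L[ℂ] StrongDual ℂ E :=
  (compL ℂ E F ℂ).flip f

@[simp] lemma dualMap_apply {E F : Type*} [SeminormedAddCommGroup E] [NormedSpace ℂ E]
    [SeminormedAddCommGroup F] [NormedSpace ℂ F] (f : E →L[ℂ] F) (g : StrongDual ℂ F) :
    dualMap f g = g.comp f :=
  rfl

variable {A : Type*} [NonUnitalNormedRing A] [NormedSpace ℂ A]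
variable {B : Type*} [NonUnitalNormedRing B] [NormedSpace ℂ B]

def bilFormsPullback (T : A →L[ℂ] B) : BilForms B →L[ℂ] BilForms A :=
  (compL ℂ A (StrongDual ℂ B) (StrongDual ℂ A) (dualMap T)).comp
    ((compL ℂ A B (StrongDual ℂ B)).flip T)

def tensorBidualMap (T : A →L[ℂ] B) : TensorBidual A →L[ℂ] TensorBidual B :=
  dualMap (E := BilForms B) (F := BilForms A) (bilFormsPullback T)

def bidualMap (T : A →L[ℂ] B) : Bidual A →L[ℂ] Bidual B :=
  dualMap (E := StrongDual ℂ B) (F := StrongDual ℂ A) (dualMap T)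

@[simp] lemma bilFormsPullback_apply (T : A →L[ℂ] B) (f : BilForms B) (x y : A) :
    bilFormsPullback T f x y = f (T x) (T y) :=
  rfl

lemma inclB_map (T : A →L[ℂ] B) (a : A) : inclB (T a) = bidualMap T (inclB a) :=
  rfl

variable [IsScalarTower ℂ A A] [SMulCommClass ℂ A A] [IsScalarTower ℂ B B] [SMulCommClass ℂ B B]

@[simp] lemma leftBil_apply (a : A) (f : BilForms A) (x y : A) :
    leftBil A a f x y = f (a * x) y :=
  rfl

@[simp] lemma rightBil_apply (a : A) (f : BilForms A) (x y : A) :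
    rightBil A a f x y = f x (y * a) :=
  rfl

@[simp] lemma piStar_apply (g : StrongDual ℂ A) (x y : A) :
    piStar A g x y = g (x * y) :=
  rfl

@[simp] lemma dualROp_apply (a : A) (g : StrongDual ℂ A) (x : A) :
    dualROp A a g x = g (a * x) :=
  rfl

@[simp] lemma dualLOp_apply (a : A) (g : StrongDual ℂ A) (x : A) :
    dualLOp A a g x = g (x * a) :=
  rfl

section Multiplicative

variable (T : A →L[ℂ] B) (hT : ∀ x y : A, T (x * y) = T x * T y)
include hT

lemma tsmulL_tensorBidualMap (a : A) (m : TensorBidual A) :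
    tsmulL (T a) (tensorBidualMap T m) = tensorBidualMap T (tsmulL a m) := by
  ext f
  simp only [tsmulL, tensorBidualMap, dualMap_apply, comp_apply]
  congr 1
  ext x y
  simp [hT]

lemma tsmulR_tensorBidualMap (a : A) (m : TensorBidual A) :
    tsmulR (T a) (tensorBidualMap T m) = tensorBidualMap T (tsmulR a m) := by
  ext f
  simp only [tsmulR, tensorBidualMap, dualMap_apply, comp_apply]
  congr 1
  ext x y
  simp [hT]

lemma piSS_tensorBidualMap (m : TensorBidual A) :
    piSS (tensorBidualMap T m) = bidualMap T (piSS m) := by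
  ext g
  simp only [piSS, tensorBidualMap, bidualMap, dualMap_apply, comp_apply]
  congr 1
  ext x y
  simp [hT]

lemma bsmulL_bidualMap (a : A) (Φ : Bidual A) :
    bsmulL (T a) (bidualMap T Φ) = bidualMap T (bsmulL a Φ) := by
  ext g
  simp only [bsmulL, bidualMap, dualMap_apply, comp_apply]
  congr 1
  ext x
  simp [hT]

lemma bsmulR_bidualMap (a : A) (Φ : Bidual A) :
    bsmulR (T a) (bidualMap T Φ) = bidualMap T (bsmulR a Φ) := by
  ext g
  simp only [bsmulR, bidualMap, dualMap_apply, comp_apply]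
  congr 1
  ext x
  simp [hT]

end Multiplicative

end

theorem strongPseudoAmenable_of_epimorphism_general
    (A : Type) [NonUnitalNormedRing A] [NormedSpace ℂ A] [IsScalarTower ℂ A A]
    [SMulCommClass ℂ A A]
    (B : Type) [NonUnitalNormedRing B] [NormedSpace ℂ B] [IsScalarTower ℂ B B]
    [SMulCommClass ℂ B B]
    (hA : StrongPseudoAmenable A)
    (T : A → B) (hlin : IsLinearMap ℂ T) (hcont : Continuous T)
    (hmul : ∀ x y : A, T (x * y) = T x * T y) (hsurj : Function.Surjective T) :
    StrongPseudoAmenable B := by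
  obtain ⟨T, rfl⟩ : ∃ T' : A →L[ℂ] B, ⇑T' = T := ⟨⟨hlin.mk' T, hcont⟩, rfl⟩
  obtain ⟨D, m, hdiag, hcomm, happrox⟩ := hA
  refine ⟨D, fun α => tensorBidualMap T (m α), fun b => ?_, fun b α => ?_, fun b => ?_⟩ <;>
    obtain ⟨a, rfl⟩ := hsurj b
  · simpa only [tsmulL_tensorBidualMap T hmul, tsmulR_tensorBidualMap T hmul, map_sub, map_zero]
      using (hdiag a).map (Y := TensorBidual B) (tensorBidualMap T).continuous
  · simp only [piSS_tensorBidualMap T hmul, bsmulL_bidualMap T hmul, bsmulR_bidualMap T hmul,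
      hcomm a α]
  · simpa only [piSS_tensorBidualMap T hmul, bsmulR_bidualMap T hmul, inclB_map]
      using (happrox a).map (Y := Bidual B) (bidualMap T).continuous

/-- Let `A` and `B` be Banach algebras, `A` strong pseudo-amenable, and
`T : A → B` a continuous surjective algebra homomorphism. Then `B` is strong
pseudo-amenable. -/
theorem strongPseudoAmenable_of_epimorphism
    (A : Type) [NonUnitalNormedRing A] [NormedSpace ℂ A] [IsScalarTower ℂ A A]
    [SMulCommClass ℂ A A] [CompleteSpace A]
    (B : Type) [NonUnitalNormedRing B] [NormedSpace ℂ B] [IsScalarTower ℂ B B]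
    [SMulCommClass ℂ B B] [CompleteSpace B]
    (hA : StrongPseudoAmenable A)
    (T : A → B) (hlin : IsLinearMap ℂ T) (hcont : Continuous T)
    (hmul : ∀ x y : A, T (x * y) = T x * T y) (hsurj : Function.Surjective T) :
    StrongPseudoAmenable B :=
  strongPseudoAmenable_of_epimorphism_general A B hA T hlin hcont hmul hsurj
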